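/- arXiv:1805.08585 — 3 statements merged into one kernel-verified Lean document; each statement's English description precedes it below -/
import Mathlib

section
/- The function W_A(x) = 2·Σ_{i<j} ln(x_i - x_j) - ‖x‖²/2 on the open Weyl chamber {x ∈ ℝ^N : x_1 > x_2 > ... > x_N} attains its maximum at a point y if and only if y_i/2 = Σ_{j≠i} 1/(y_i - y_j) for all i = 1,...,N. -/
open Finset

noncomputable def WA (N : ℕ) (x : Fin N → ℝ) : ℝ :=
  2 * ∑ i, ∑ j ∈ Finset.univ.filter (fun j => i < j), Real.log (x i - x j)
    - (∑ i, (x i) ^ 2) / 2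

/-!
`W_A` is a sum of logarithms of linear forms minus a convex quadratic, hence concave on the
convex open chamber. On an open set a maximiser is a critical point, and for a concave function
a critical point is a global maximiser: the slope of the concave restriction
`t ↦ W_A (y + t (x - y))` on `[0, 1]` is bounded by its derivative at `0`. The critical point
equations are `∂ᵢ W_A (y) = 2 ∑_{j ≠ i} 1 / (yᵢ - yⱼ) - yᵢ = 0`, the partial derivative being
computed by pairing the terms `(i, j)` and `(j, i)` of the antisymmetric kernel `1 / (yᵢ - yⱼ)`.
-/

section Convexity

variable {E : Type*} [AddCommGroup E] [Module ℝ E] {s : Set E}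

theorem ConvexOn.fun_sum {ι : Type*} {t : Finset ι} {f : ι → E → ℝ} (hs : Convex ℝ s)
    (hf : ∀ i ∈ t, ConvexOn ℝ s (f i)) : ConvexOn ℝ s fun x => ∑ i ∈ t, f i x := by
  classical
  induction t using Finset.induction_on with
  | empty => simpa using convexOn_const (0 : ℝ) hs
  | insert a t ha ih =>
    simp_rw [sum_insert ha]
    exact (hf a (mem_insert_self a t)).add (ih fun i hi => hf i (mem_insert_of_mem hi))

theorem ConcaveOn.fun_sum {ι : Type*} {t : Finset ι} {f : ι → E → ℝ} (hs : Convex ℝ s)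
    (hf : ∀ i ∈ t, ConcaveOn ℝ s (f i)) : ConcaveOn ℝ s fun x => ∑ i ∈ t, f i x := by
  classical
  induction t using Finset.induction_on with
  | empty => simpa using concaveOn_const (0 : ℝ) hs
  | insert a t ha ih =>
    simp_rw [sum_insert ha]
    exact (hf a (mem_insert_self a t)).add (ih fun i hi => hf i (mem_insert_of_mem hi))

end Convexity

theorem ConcaveOn.isMaxOn_of_hasFDerivAt_eq_zero {E : Type*} [NormedAddCommGroup E]
    [NormedSpace ℝ E] {s : Set E} {f : E → ℝ} {y : E} (hf : ConcaveOn ℝ s f) (hy : y ∈ s)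
    (hf' : HasFDerivAt f (0 : E →L[ℝ] ℝ) y) : IsMaxOn f s y := by
  refine isMaxOn_iff.2 fun x hx => ?_
  let g : ℝ →ᵃ[ℝ] E := AffineMap.lineMap y x
  have hg : HasDerivAt (f ∘ g) 0 0 := by
    have hf'' : HasFDerivAt f (0 : E →L[ℝ] ℝ) (g 0) := by simpa [g] using hf'
    simpa using hf''.comp_hasDerivAt (0 : ℝ) (AffineMap.hasDerivAt_lineMap (a := y) (b := x))
  have := (hf.comp_affineMap g).slope_le_of_hasDerivAt (x := 0) (y := 1)
    (by simpa [g] using hy) (by simpa [g] using hx) zero_lt_one hg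
  simpa [slope, g] using this

theorem convex_setOf_strictAnti {ι : Type*} [Preorder ι] :
    Convex ℝ {x : ι → ℝ | StrictAnti x} := by
  intro x hx z hz a b ha hb hab i j hij
  simp only [Pi.add_apply, Pi.smul_apply, smul_eq_mul]
  rcases ha.eq_or_lt with rfl | ha
  · simpa [(zero_add b).symm.trans hab] using hz hij
  · exact add_lt_add_of_lt_of_le (mul_lt_mul_of_pos_left (hx hij) ha)
      (mul_le_mul_of_nonneg_left (hz hij).le hb)

theorem isOpen_setOf_strictAnti {ι : Type*} [Preorder ι] [Finite ι] :
    IsOpen {x : ι → ℝ | StrictAnti x} := by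
  have : {x : ι → ℝ | StrictAnti x} = ⋂ i, ⋂ j, ⋂ (_ : i < j), {x | x j < x i} := by
    ext; simp [StrictAnti]
  rw [this]
  exact isOpen_iInter_of_finite fun i => isOpen_iInter_of_finite fun j =>
    isOpen_iInter_of_finite fun _ => isOpen_lt (continuous_apply j) (continuous_apply i)

theorem ContinuousLinearMap.sum_smul_proj_eq_zero_iff {ι : Type*} [Fintype ι] [DecidableEq ι]
    (c : ι → ℝ) :
    ∑ i, c i • (ContinuousLinearMap.proj i : (ι → ℝ) →L[ℝ] ℝ) = 0 ↔ c = 0 := by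
  refine ⟨fun h => funext fun i => ?_, fun h => by simp [h]⟩
  simpa [Pi.single_apply] using congrArg (fun L => L (Pi.single i 1)) h

theorem sum_sum_lt_mul_sub_of_antisymm {ι R : Type*} [Fintype ι] [LinearOrder ι] [CommRing R]
    (d : ι → R) (a : ι → ι → R) (ha : ∀ i j, a j i = -a i j) :
    ∑ i, ∑ j ∈ univ.filter (i < ·), a i j * (d i - d j)
      = ∑ i, (∑ j ∈ univ.erase i, a i j) * d i := by
  have hsplit : ∀ i : ι, univ.erase i = univ.filter (i < ·) ∪ univ.filter (· < i) := by
    intro i; ext j; simp [eq_comm]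
  have hswap : ∑ i, ∑ j ∈ univ.filter (· < i), a i j * d i
      = -∑ i, ∑ j ∈ univ.filter (i < ·), a i j * d j := by
    rw [sum_comm' (t' := univ) (s' := fun j => univ.filter (j < ·)) (by intro i j; simp)]
    simp only [← sum_neg_distrib]
    refine sum_congr rfl fun i _ => sum_congr rfl fun j _ => ?_
    rw [ha]
    ring
  simp only [hsplit, sum_union (disjoint_filter.2 fun j _ h h' => lt_asymm h h'),
    add_mul, sum_mul, sum_add_distrib, hswap, mul_sub, sum_sub_distrib]
  ring

theorem concaveOn_WA (N : ℕ) : ConcaveOn ℝ {x : Fin N → ℝ | StrictAnti x} (WA N) := by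
  have hs := convex_setOf_strictAnti (ι := Fin N)
  have hlog : ConcaveOn ℝ {x : Fin N → ℝ | StrictAnti x}
      fun x => ∑ i, ∑ j ∈ univ.filter (fun j => i < j), Real.log (x i - x j) := by
    refine ConcaveOn.fun_sum hs fun i _ => ConcaveOn.fun_sum hs fun j hj => ?_
    refine (strictConcaveOn_log_Ioi.concaveOn.comp_linearMap
      (LinearMap.proj (R := ℝ) (φ := fun _ : Fin N => ℝ) i - LinearMap.proj j)).subset
      (fun x hx => ?_) hs
    exact sub_pos.2 (hx (by simpa using hj))
  have hsq : ConvexOn ℝ {x : Fin N → ℝ | StrictAnti x} fun x => ∑ i, x i ^ 2 :=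
    ConvexOn.fun_sum hs fun i _ =>
      ((Even.convexOn_pow (𝕜 := ℝ) even_two).comp_linearMap
        (LinearMap.proj (R := ℝ) (φ := fun _ : Fin N => ℝ) i)).subset (Set.subset_univ _) hs
  refine ((hlog.smul zero_le_two).sub (hsq.smul (by norm_num : (0 : ℝ) ≤ 1 / 2))).congr
    fun x _ => ?_
  simp only [WA, Pi.sub_apply, smul_eq_mul]
  ring

noncomputable def gradWA {N : ℕ} (y : Fin N → ℝ) (i : Fin N) : ℝ :=
  2 * ∑ j ∈ univ.erase i, 1 / (y i - y j) - y i

theorem hasFDerivAt_WA {N : ℕ} {y : Fin N → ℝ} (hy : StrictAnti y) :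
    HasFDerivAt (WA N)
      (∑ i, gradWA y i • (ContinuousLinearMap.proj i : (Fin N → ℝ) →L[ℝ] ℝ)) y := by
  let π (i : Fin N) : (Fin N → ℝ) →L[ℝ] ℝ := ContinuousLinearMap.proj i
  have hlog : HasFDerivAt
      (fun x : Fin N → ℝ => ∑ i, ∑ j ∈ univ.filter (fun j => i < j), Real.log (x i - x j))
      (∑ i, ∑ j ∈ univ.filter (fun j => i < j), (y i - y j)⁻¹ • (π i - π j)) y := by
    refine HasFDerivAt.fun_sum fun i _ => HasFDerivAt.fun_sum fun j hj => ?_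
    exact ((hasFDerivAt_apply i y).sub (hasFDerivAt_apply j y)).log
      (sub_pos.2 (hy (by simpa using hj))).ne'
  have hsq : HasFDerivAt (fun x : Fin N → ℝ => ∑ i, x i ^ 2) (∑ i, (2 * y i) • π i) y :=
    HasFDerivAt.fun_sum fun i _ => by simpa using (hasFDerivAt_apply (𝕜 := ℝ) i y).pow 2
  have hWA : WA N = fun x => 2 * ∑ i, ∑ j ∈ univ.filter (fun j => i < j), Real.log (x i - x j)
      - 2⁻¹ * ∑ i, x i ^ 2 := funext fun x => by rw [WA, div_eq_inv_mul]
  rw [hWA]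
  refine ((hlog.const_mul 2).sub (hsq.const_mul 2⁻¹)).congr_fderiv
    (ContinuousLinearMap.ext fun d => ?_)
  simp only [π, gradWA, one_div, sub_apply, FunLike.coe_sum, Finset.sum_apply, smul_apply,
    ContinuousLinearMap.proj_apply, smul_eq_mul,
    sum_sum_lt_mul_sub_of_antisymm d (fun i j => (y i - y j)⁻¹)
      fun i j => by rw [← neg_sub, inv_neg]]
  rw [mul_sum, mul_sum, ← sum_sub_distrib]
  exact sum_congr rfl fun i _ => by ring

theorem stmt_1 (N : ℕ) (y : Fin N → ℝ) (hy : StrictAnti y) :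
    (∀ x : Fin N → ℝ, StrictAnti x → WA N x ≤ WA N y) ↔
      (∀ i, y i / 2 = ∑ j ∈ Finset.univ.erase i, 1 / (y i - y j)) := by
  have hcrit_iff : (∀ i, y i / 2 = ∑ j ∈ univ.erase i, 1 / (y i - y j)) ↔ gradWA y = 0 := by
    simp only [funext_iff, gradWA, Pi.zero_apply]
    exact forall_congr' fun i => ⟨fun h => by linarith, fun h => by linarith⟩
  have hmax_iff : (∀ x : Fin N → ℝ, StrictAnti x → WA N x ≤ WA N y) ↔
      IsMaxOn (WA N) {x | StrictAnti x} y := isMaxOn_iff.symm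
  rw [hmax_iff, hcrit_iff, ← ContinuousLinearMap.sum_smul_proj_eq_zero_iff]
  refine ⟨fun hmax => ?_, fun hgrad => ?_⟩
  · exact (hmax.isLocalMax (isOpen_setOf_strictAnti.mem_nhds hy)).hasFDerivAt_eq_zero
      (hasFDerivAt_WA hy)
  · exact (concaveOn_WA N).isMaxOn_of_hasFDerivAt_eq_zero hy (hgrad ▸ hasFDerivAt_WA hy)
end

section
/- Let t > 0 and let z ∈ ℝ^N be the vector of zeros of the Hermite polynomial H_N, normalized so that the critical equations z_i/t = 2·Σ_{j≠i} 1/(z_i - z_j) hold (i.e., z/√(2t) are the zeros of H_N). Then -‖z‖²/(2t) + 2·Σ_{i<j} ln(z_i - z_j) = -(N(N-1)/2)·(1 - ln t) + Σ_{j=1}^N j·ln j. -/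
open Finset

section HermiteAux
open Polynomial

noncomputable def hq (t : ℝ) : ℕ → ℝ[X]
  | 0 => 1
  | 1 => X
  | (k+2) => X * hq t (k+1) - C ((k+1) * t) * hq t k

lemma hq_zero (t : ℝ) : hq t 0 = 1 := rfl
lemma hq_one (t : ℝ) : hq t 1 = X := rfl
lemma hq_rec (t : ℝ) (k : ℕ) : hq t (k+2) = X * hq t (k+1) - C (((k:ℝ)+1) * t) * hq t k := rfl

lemma hq_monic (t : ℝ) : ∀ k, (hq t k).Monic ∧ (hq t k).degree = (k : WithBot ℕ) := by
  have key : ∀ k, ((hq t k).Monic ∧ (hq t k).degree = (k : WithBot ℕ)) ∧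
      ((hq t (k+1)).Monic ∧ (hq t (k+1)).degree = ((k+1 : ℕ) : WithBot ℕ)) := by
    intro k
    induction k with
    | zero => exact ⟨⟨monic_one, degree_one⟩, ⟨monic_X, degree_X⟩⟩
    | succ k ih =>
      refine ⟨ih.2, ?_⟩
      rw [hq_rec]
      have h1 : (X * hq t (k+1)).Monic := monic_X.mul ih.2.1
      have hd1 : (X * hq t (k+1)).degree = ((k + 2 : ℕ) : WithBot ℕ) := by
        rw [degree_mul, degree_X, ih.2.2]
        exact_mod_cast (by omega : 1 + (k+1) = k + 2)
      have hd2 : (-(C (((k:ℝ)+1) * t) * hq t k)).degree < (X * hq t (k+1)).degree := by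
        rw [degree_neg, hd1]
        calc (C (((k:ℝ)+1) * t) * hq t k).degree ≤ 0 + (hq t k).degree :=
              degree_mul_le_of_le degree_C_le le_rfl
        _ = ((k : ℕ) : WithBot ℕ) := by rw [ih.1.2, zero_add]
        _ < ((k+2 : ℕ) : WithBot ℕ) := by exact_mod_cast (by omega : k < k + 2)
      constructor
      · rw [sub_eq_add_neg]; exact h1.add_of_left hd2
      · rw [sub_eq_add_neg, degree_add_eq_left_of_degree_lt hd2, hd1]
  exact fun k => (key k).1

lemma hq_natDegree (t : ℝ) (k : ℕ) : (hq t k).natDegree = k :=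
  natDegree_eq_of_degree_eq_some (hq_monic t k).2

lemma hq_ne_zero (t : ℝ) (k : ℕ) : hq t k ≠ 0 := (hq_monic t k).1.ne_zero

lemma hq_deriv (t : ℝ) : ∀ k, derivative (hq t k) = C (k : ℝ) * hq t (k-1) := by
  have key : ∀ k, (derivative (hq t k) = C (k : ℝ) * hq t (k-1)) ∧
      (derivative (hq t (k+1)) = C ((k+1 : ℕ) : ℝ) * hq t k) := by
    intro k
    induction k with
    | zero => constructor <;> simp [hq_zero, hq_one]
    | succ k ih =>
      refine ⟨ih.2, ?_⟩
      rw [hq_rec, derivative_sub, derivative_mul, derivative_mul, derivative_X, derivative_C,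
        ih.2, ih.1]
      rcases k with _ | k
      · simp [hq_zero, hq_one, hq_rec, map_ofNat]; ring
      · simp only [show (k+1:ℕ)-1 = k from rfl, show k+1+1 = k+2 from rfl, hq_rec]
        push_cast
        simp only [C_mul, C_add, C_1, map_ofNat]
        ring
  exact fun k => (key k).1

lemma hq_deriv' (t : ℝ) (k : ℕ) : derivative (hq t (k+1)) = C ((k+1 : ℕ) : ℝ) * hq t k := by
  rw [hq_deriv]; rfl

lemma hq_monic' (t : ℝ) (k : ℕ) : (hq t k).Monic := (hq_monic t k).1
lemma hq_degree (t : ℝ) (k : ℕ) : (hq t k).degree = (k : WithBot ℕ) := (hq_monic t k).2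

lemma hq_ode (t : ℝ) (n : ℕ) :
    C t * derivative (derivative (hq t n)) + C (n : ℝ) * hq t n = X * derivative (hq t n) := by
  match n with
  | 0 => simp [hq_zero]
  | 1 => simp [hq_one]
  | (k+2) =>
    rw [hq_deriv' t (k+1), derivative_mul, derivative_C, hq_deriv' t k]
    rw [hq_rec t k]
    push_cast
    simp only [C_mul, C_add, C_1, map_ofNat]
    ring



lemma eq_hq (t : ℝ) (n : ℕ) (p : ℝ[X]) (hm : p.Monic) (hd : p.natDegree = n)
    (hode : C t * derivative (derivative p) + C (n:ℝ) * p = X * derivative p) : p = hq t n := by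
  by_contra hne
  set d := p - hq t n with hdd
  have hd0 : d ≠ 0 := sub_ne_zero.mpr hne
  have hdeg : d.natDegree < n := by
    have h1 : d.degree < p.degree := by
      apply degree_sub_lt
      · rw [degree_eq_natDegree hm.ne_zero, hd, hq_degree]
      · exact hm.ne_zero
      · rw [hm.leadingCoeff, (hq_monic' t n).leadingCoeff]
    rw [degree_eq_natDegree hm.ne_zero, hd] at h1
    exact (natDegree_lt_iff_degree_lt hd0).mpr h1
  have hode_d : C t * derivative (derivative d) + C (n:ℝ) * d = X * derivative d := by
    rw [hdd, derivative_sub, derivative_sub]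
    linear_combination hode - hq_ode t n
  have ha0 : d.coeff d.natDegree ≠ 0 := mt leadingCoeff_eq_zero.mp hd0
  have hcoeff := congrArg (fun f => Polynomial.coeff f d.natDegree) hode_d
  simp only [coeff_add, coeff_C_mul] at hcoeff
  have h2 : (derivative (derivative d)).coeff d.natDegree = 0 := by
    rw [coeff_derivative, coeff_derivative, coeff_eq_zero_of_natDegree_lt (by omega), zero_mul,
      zero_mul]
  rw [h2, mul_zero, zero_add] at hcoeff
  rcases hnn : d.natDegree with _ | m'
  · rw [hnn] at hcoeff
    have hx : (X * derivative d).coeff 0 = 0 := by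
      rw [mul_coeff_zero, coeff_X_zero, zero_mul]
    rw [hx] at hcoeff
    have hn0 : (n : ℝ) ≠ 0 := Nat.cast_ne_zero.mpr (by omega)
    rw [hnn] at ha0
    exact ha0 ((mul_eq_zero.mp hcoeff).resolve_left hn0)
  · rw [hnn, coeff_X_mul, coeff_derivative, ← hnn] at hcoeff
    have key : d.coeff d.natDegree * ((n : ℝ) - ((m':ℝ) + 1)) = 0 := by
      linear_combination hcoeff
    rcases mul_eq_zero.mp key with h | h
    · exact ha0 h
    · have h1 : (n : ℝ) = (m' : ℝ) + 1 := by linarith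
      have h2 : n = m' + 1 := by exact_mod_cast h1
      omega

lemma derivative_finset_prod {R ι : Type*} [CommSemiring R] [DecidableEq ι]
    (s : Finset ι) (f : ι → R[X]) :
    derivative (∏ i ∈ s, f i) = ∑ i ∈ s, (∏ j ∈ s.erase i, f j) * derivative (f i) := by
  rw [Finset.prod_eq_multiset_prod, Polynomial.derivative_prod, Finset.sum_eq_multiset_sum]
  apply congrArg
  apply Multiset.map_congr rfl
  intro i hi
  rw [← Finset.erase_val, ← Finset.prod_eq_multiset_prod]

section evals
variable {N : ℕ} (z : Fin N → ℝ)

lemma eval_deriv_prod (m : Fin N) :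
    eval (z m) (derivative (∏ i, (X - C (z i)))) = ∏ j ∈ univ.erase m, (z m - z j) := by
  classical
  rw [derivative_finset_prod, eval_finset_sum, Finset.sum_eq_single m]
  · simp [eval_prod]
  · intro i _ him
    have : eval (z m) (∏ a ∈ univ.erase i, (X - C (z a))) = 0 := by
      rw [eval_prod]
      exact Finset.prod_eq_zero (Finset.mem_erase.mpr ⟨Ne.symm him, mem_univ m⟩) (by simp)
    simp [this]
  · simp

lemma eval_dderiv_prod (m : Fin N) :
    eval (z m) (derivative (derivative (∏ i, (X - C (z i))))) =
      2 * ∑ j ∈ univ.erase m, ∏ k ∈ (univ.erase m).erase j, (z m - z k) := by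
  classical
  rw [derivative_finset_prod, derivative_sum]
  simp only [derivative_mul, derivative_X_sub_C, derivative_one, mul_one, mul_zero, add_zero,
    derivative_finset_prod]
  rw [eval_finset_sum]
  have key : ∀ i : Fin N, eval (z m)
      (∑ x ∈ (univ.erase i), ∏ j ∈ (univ.erase i).erase x, (X - C (z j)))
      = if i = m then ∑ j ∈ univ.erase m, ∏ k ∈ (univ.erase m).erase j, (z m - z k)
        else ∏ k ∈ (univ.erase m).erase i, (z m - z k) := by
    intro i
    rw [eval_finset_sum]
    split_ifs with him
    · subst him
      exact Finset.sum_congr rfl (fun j hj => by simp [eval_prod])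
    · rw [Finset.sum_eq_single m]
      · rw [eval_prod, Finset.erase_right_comm]; simp
      · intro j hj hjm
        have : eval (z m) (∏ k ∈ (univ.erase i).erase j, (X - C (z k))) = 0 := by
          rw [eval_prod]
          refine Finset.prod_eq_zero (Finset.mem_erase.mpr ⟨Ne.symm hjm,
            Finset.mem_erase.mpr ⟨Ne.symm him, mem_univ m⟩⟩) (by simp)
        simp [this]
      · intro hm
        exact absurd (Finset.mem_erase.mpr ⟨Ne.symm him, mem_univ m⟩) hm
  rw [Finset.sum_congr rfl (fun i _ => key i), ← Finset.add_sum_erase univ _ (mem_univ m),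
    if_pos rfl, Finset.sum_congr rfl (fun i hi => if_neg (Finset.mem_erase.mp hi).1)]
  ring
end evals

lemma crit_ode {N : ℕ} (hN : 1 ≤ N) (t : ℝ) (ht : t ≠ 0) (z : Fin N → ℝ)
    (hinj : Function.Injective z)
    (hcrit : ∀ i, z i / t = 2 * ∑ j ∈ Finset.univ.erase i, 1 / (z i - z j)) :
    C t * derivative (derivative (∏ i, (X - C (z i)))) + C (N:ℝ) * (∏ i, (X - C (z i)))
      = X * derivative (∏ i, (X - C (z i))) := by
  classical
  set p : ℝ[X] := ∏ i, (X - C (z i)) with hp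
  have hpm : p.Monic := monic_prod_of_monic _ _ (fun i _ => monic_X_sub_C _)
  have hpd : p.natDegree = N := by
    rw [hp, natDegree_prod _ _ (fun i _ => X_sub_C_ne_zero _)]
    simp
  set r : ℝ[X] := C t * derivative (derivative p) + C (N:ℝ) * p - X * derivative p with hr
  have heval : ∀ m, eval (z m) r = 0 := by
    intro m
    have hzm : eval (z m) p = 0 := by
      rw [hp, eval_prod]
      exact Finset.prod_eq_zero (mem_univ m) (by simp)
    rw [hr, eval_sub, eval_add, eval_mul, eval_mul, eval_mul, eval_C, eval_C, eval_X, hzm,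
      mul_zero, add_zero, eval_deriv_prod, eval_dderiv_prod]
    have hcm := hcrit m
    have hzmt : z m = t * (2 * ∑ j ∈ univ.erase m, 1 / (z m - z j)) := by
      field_simp at hcm ⊢
      linarith [hcm]
    have hsum : (∑ j ∈ univ.erase m, 1 / (z m - z j)) * (∏ j ∈ univ.erase m, (z m - z j))
        = ∑ j ∈ univ.erase m, ∏ k ∈ (univ.erase m).erase j, (z m - z k) := by
      rw [Finset.sum_mul]
      refine Finset.sum_congr rfl ?_
      intro j hj
      rw [← Finset.mul_prod_erase (univ.erase m) _ hj, ← mul_assoc, one_div,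
        inv_mul_cancel₀ (sub_ne_zero.mpr (fun h => (Finset.mem_erase.mp hj).1 (hinj h).symm)),
        one_mul]
    linear_combination (-(2*t)) * hsum - (∏ j ∈ univ.erase m, (z m - z j)) * hzmt
  have hrdeg : r.degree < (N : WithBot ℕ) := by
    rw [degree_lt_iff_coeff_zero]
    intro k hk
    have hk' : (N : ℕ) ≤ k := by exact_mod_cast hk
    have h2 : (derivative (derivative p)).coeff k = 0 := by
      rw [coeff_derivative, coeff_derivative, coeff_eq_zero_of_natDegree_lt (by omega), zero_mul,
        zero_mul]
    obtain ⟨k', rfl⟩ : ∃ k', k = k' + 1 := ⟨k - 1, by omega⟩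
    rw [hr, coeff_sub, coeff_add, coeff_C_mul, coeff_C_mul, h2, mul_zero, zero_add,
      coeff_X_mul, coeff_derivative]
    rcases eq_or_lt_of_le hk' with he | hlt
    · have hc : p.coeff (k' + 1) = 1 := by
        rw [show k' + 1 = p.natDegree by omega]; exact hpm.coeff_natDegree
      rw [hc]
      have : (N : ℝ) = (k' : ℝ) + 1 := by exact_mod_cast he
      linarith
    · rw [coeff_eq_zero_of_natDegree_lt (show p.natDegree < k' + 1 by omega)]
      ring
  have hr0 : r = 0 := by
    by_cases h : r = 0
    · exact h
    · exact eq_zero_of_natDegree_lt_card_of_eval_eq_zero r hinj heval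
        (by rw [Fintype.card_fin]; exact (natDegree_lt_iff_degree_lt h).mpr hrdeg)
  have h := hr0
  rw [hr] at h
  exact sub_eq_zero.mp h

lemma multiset_prod_swap (s u : Multiset ℂ) :
    (s.map (fun w => (u.map (fun v => w - v)).prod)).prod =
      (-1)^(Multiset.card s * Multiset.card u) *
        (u.map (fun v => (s.map (fun w => v - w)).prod)).prod := by
  induction s using Multiset.induction with
  | empty => simp
  | cons a s ih =>
    rw [Multiset.map_cons, Multiset.prod_cons, ih]
    have h1 : (u.map (fun v => a - v)).prod = (-1)^(Multiset.card u) * (u.map (fun v => v - a)).prod := by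
      rw [show (fun v : ℂ => a - v) = (Neg.neg ∘ fun v : ℂ => v - a) by funext v; simp, ← Multiset.map_map,
        Multiset.prod_map_neg, Multiset.card_map]
    have h2 : (u.map (fun v => (Multiset.map (fun w => v - w) (a ::ₘ s)).prod)).prod
        = (u.map (fun v => v - a)).prod * (u.map (fun v => (s.map (fun w => v - w)).prod)).prod := by
      rw [← Multiset.prod_map_mul]
      apply congrArg
      apply Multiset.map_congr rfl
      intro v _
      rw [Multiset.map_cons, Multiset.prod_cons]
    rw [h2, h1, Multiset.card_cons]
    ring

lemma eval_eq_prod_roots {g : ℂ[X]} (hg : g.Monic) (w : ℂ) :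
    g.eval w = (g.roots.map (fun v => w - v)).prod := by
  conv_lhs => rw [(IsAlgClosed.splits g).eq_prod_roots_of_monic hg]
  rw [eval_multiset_prod, Multiset.map_map]
  apply congrArg
  apply Multiset.map_congr rfl
  intro v _
  simp

lemma prod_eval_roots_swap (f g : ℂ[X]) (hf : f.Monic) (hg : g.Monic) :
    (f.roots.map g.eval).prod = (-1)^(f.natDegree * g.natDegree) * (g.roots.map f.eval).prod := by
  have hcf : Multiset.card f.roots = f.natDegree :=
    splits_iff_card_roots.mp (IsAlgClosed.splits f)
  have hcg : Multiset.card g.roots = g.natDegree :=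
    splits_iff_card_roots.mp (IsAlgClosed.splits g)
  rw [Multiset.map_congr rfl (fun w _ => eval_eq_prod_roots hg w),
    multiset_prod_swap, hcf, hcg]
  congr 1
  apply congrArg
  apply Multiset.map_congr rfl
  intro v _
  rw [eval_eq_prod_roots hf]

noncomputable def Q (t : ℝ) (k : ℕ) : ℂ[X] := (hq t k).map (algebraMap ℝ ℂ)

lemma Q_monic (t : ℝ) (k : ℕ) : (Q t k).Monic := (hq_monic' t k).map _
lemma Q_natDegree (t : ℝ) (k : ℕ) : (Q t k).natDegree = k := by
  rw [Q, (hq_monic' t k).natDegree_map, hq_natDegree]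
lemma Q_card_roots (t : ℝ) (k : ℕ) : Multiset.card (Q t k).roots = k := by
  rw [splits_iff_card_roots.mp (IsAlgClosed.splits _), Q_natDegree]
lemma Q_rec (t : ℝ) (k : ℕ) :
    Q t (k+2) = X * Q t (k+1) - C (((k:ℂ)+1) * (t:ℂ)) * Q t k := by
  rw [Q, hq_rec, Polynomial.map_sub, Polynomial.map_mul, Polynomial.map_mul, map_X, map_C, Q, Q]
  norm_num

lemma A_step (t : ℝ) (k : ℕ) :
    ((Q t (k+1)).roots.map ((Q t k).eval)).prod
      = (-(k:ℂ) * t)^k * ((Q t k).roots.map ((Q t (k-1)).eval)).prod := by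
  rcases k with _ | j
  · rw [Multiset.map_congr rfl (fun v _ => by rw [Q, hq_zero]; simp : ∀ v ∈ (Q t 1).roots, (Q t 0).eval v = 1)]
    rw [show Q t 0 = 1 by rw [Q, hq_zero]; simp, Polynomial.roots_one]
    simp
  · set k := j + 1
    rw [prod_eval_roots_swap _ _ (Q_monic t (k+1)) (Q_monic t k), Q_natDegree, Q_natDegree]
    rw [show (-1 : ℂ)^((k+1)*k) = 1 from Even.neg_one_pow (by rw [mul_comm]; exact Nat.even_mul_succ_self k)]
    rw [one_mul]
    have hroot : ∀ v ∈ (Q t k).roots, (Q t (k+1)).eval v = (-(k:ℂ) * t) * (Q t (k-1)).eval v := by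
      intro v hv
      have h0 : (Q t k).eval v = 0 := isRoot_of_mem_roots hv
      rw [show k + 1 = j + 2 from rfl, Q_rec, eval_sub, eval_mul, eval_mul, eval_X, eval_C,
        show k - 1 = j from rfl, h0]
      push_cast
      simp only [k, Nat.cast_add, Nat.cast_one]
      ring
    rw [Multiset.map_congr rfl hroot, Multiset.prod_map_mul, Multiset.map_const', Multiset.prod_replicate,
      Q_card_roots]

lemma A_val (t : ℝ) (n : ℕ) :
    ((Q t n).roots.map ((Q t (n-1)).eval)).prod = ∏ k ∈ Finset.range n, (-(k:ℂ) * t)^k := by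
  induction n with
  | zero =>
    rw [show Q t 0 = 1 by rw [Q, hq_zero]; simp, Polynomial.roots_one]
    simp
  | succ n ih =>
    rw [show n + 1 - 1 = n from rfl, A_step, ih, Finset.prod_range_succ]
    ring

lemma prod_erase_pairs {M : Type*} [CommMonoid M] {n : ℕ} (g : Fin n → Fin n → M) :
    ∏ i, ∏ j ∈ univ.erase i, g i j
      = ∏ i, ∏ j ∈ univ.filter (fun j => i < j), (g i j * g j i) := by
  have hsplit : ∀ i : Fin n, (univ.erase i) =
      (univ.filter (fun j => j < i)) ∪ (univ.filter (fun j => i < j)) := by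
    intro i; ext j
    simp only [mem_erase, mem_union, mem_filter, mem_univ, true_and, and_true]
    constructor
    · intro h; exact lt_or_gt_of_ne h
    · rintro (h | h) <;> simp [ne_of_lt, ne_of_gt, h]
  have hdisj : ∀ i : Fin n, Disjoint (univ.filter (fun j => j < i))
      (univ.filter (fun j : Fin n => i < j)) := by
    intro i
    rw [Finset.disjoint_filter]
    intro j _ h1 h2
    exact absurd (h1.trans h2) (lt_irrefl j)
  calc ∏ i, ∏ j ∈ univ.erase i, g i j
      = ∏ i, ((∏ j ∈ univ.filter (fun j => j < i), g i j) *
          ∏ j ∈ univ.filter (fun j => i < j), g i j) := by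
        refine Finset.prod_congr rfl (fun i _ => ?_)
        rw [hsplit i, Finset.prod_union (hdisj i)]
    _ = (∏ i, ∏ j ∈ univ.filter (fun j => j < i), g i j) *
          ∏ i, ∏ j ∈ univ.filter (fun j => i < j), g i j := Finset.prod_mul_distrib
    _ = (∏ i, ∏ j ∈ univ.filter (fun j => i < j), g j i) *
          ∏ i, ∏ j ∈ univ.filter (fun j => i < j), g i j := by
        congr 1
        apply Finset.prod_comm'
        intro x y
        simp only [mem_filter, mem_univ, true_and, and_comm]
    _ = ∏ i, ∏ j ∈ univ.filter (fun j => i < j), (g i j * g j i) := by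
        rw [← Finset.prod_mul_distrib]
        refine Finset.prod_congr rfl (fun i _ => ?_)
        rw [← Finset.prod_mul_distrib]
        exact Finset.prod_congr rfl (fun j _ => mul_comm _ _)

lemma card_pairs (n : ℕ) : ∑ i : Fin n, #(univ.filter (fun j => i < j)) = ∑ k ∈ range n, k := by
  have h1 : ∀ i : Fin n, (univ.filter (fun j => i < j)) = Finset.Ioi i := by
    intro i; ext j; simp
  rw [Finset.sum_congr rfl (fun i _ => by rw [h1 i, Fin.card_Ioi])]
  rw [Fin.sum_univ_eq_sum_range (fun i => n - 1 - i), ← Finset.sum_range_reflect]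
  apply Finset.sum_congr rfl
  intro k hk
  simp only [mem_range] at hk
  omega


lemma P4 {N : ℕ} (t : ℝ) (z : Fin N → ℝ) (hpq : (∏ i, (X - C (z i))) = hq t N) :
    ∏ i, eval (z i) (hq t (N-1)) = ∏ k ∈ Finset.range N, (-(k:ℝ) * t)^k := by
  have hQ : Q t N = ∏ i, (X - C ((z i : ℝ) : ℂ)) := by
    rw [Q, ← hpq, Polynomial.map_prod]
    refine Finset.prod_congr rfl (fun i _ => ?_)
    rw [Polynomial.map_sub, map_X, map_C]
    norm_num
  have hroots : (Q t N).roots = Multiset.map (fun i => ((z i : ℝ) : ℂ)) univ.val := by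
    rw [hQ, Finset.prod_eq_multiset_prod]
    have : Multiset.map (fun i => X - C ((z i : ℝ) : ℂ)) univ.val
        = Multiset.map (fun a : ℂ => X - C a) (Multiset.map (fun i => ((z i : ℝ) : ℂ)) univ.val) := by
      rw [Multiset.map_map]; rfl
    rw [this, Polynomial.roots_multiset_prod_X_sub_C]
  have heach : ∀ x : ℝ, (Q t (N-1)).eval ((x : ℝ) : ℂ) = ((eval x (hq t (N-1)) : ℝ) : ℂ) := by
    intro x
    rw [Q, eval_map, show ((x:ℝ):ℂ) = algebraMap ℝ ℂ x from rfl, eval₂_at_apply]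
    rfl
  have hcast : ((∏ i, eval (z i) (hq t (N-1)) : ℝ) : ℂ)
      = ∏ k ∈ Finset.range N, (-(k:ℂ) * t)^k := by
    rw [← A_val t N, hroots, Multiset.map_map]
    rw [show ((fun a : ℂ => eval a (Q t (N-1))) ∘ fun i => ((z i : ℝ) : ℂ))
      = fun i => ((eval (z i) (hq t (N-1)) : ℝ) : ℂ) by funext i; exact heach (z i)]
    rw [← Finset.prod_eq_multiset_prod]
    push_cast
    rfl
  have := hcast
  push_cast at this
  exact_mod_cast this

end HermiteAux
theorem stmt_2 (N : ℕ) (t : ℝ) (ht : 0 < t) (z : Fin N → ℝ) (hord : StrictAnti z)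
    (hcrit : ∀ i, z i / t = 2 * ∑ j ∈ Finset.univ.erase i, 1 / (z i - z j)) :
    -(∑ i, (z i) ^ 2) / (2 * t)
        + 2 * ∑ i, ∑ j ∈ Finset.univ.filter (fun j => i < j), Real.log (z i - z j)
      = -((N : ℝ) * (N - 1) / 2) * (1 - Real.log t)
        + ∑ j ∈ Finset.range N, ((j : ℝ) + 1) * Real.log ((j : ℝ) + 1) := by
  classical
  rcases Nat.eq_zero_or_pos N with hN0 | hN
  · subst hN0
    simp
  have ht' : t ≠ 0 := ne_of_gt ht
  have hinj : Function.Injective z := hord.injective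
  have hzsub : ∀ i j : Fin N, i ≠ j → z i - z j ≠ 0 :=
    fun i j h => sub_ne_zero.mpr (fun e => h (hinj e))
  -- double sum swap
  have hswap : ∀ G : Fin N → Fin N → ℝ,
      ∑ i, ∑ j ∈ univ.erase i, G i j = ∑ i, ∑ j ∈ univ.erase i, G j i := by
    intro G
    apply Finset.sum_comm'
    intro x y
    simp only [Finset.mem_erase, Finset.mem_univ, and_true, true_and, and_comm]
    rw [ne_comm]
  -- Part A : sum of squares
  have h2T : (∑ i, ∑ j ∈ univ.erase i, z i / (z i - z j)) * 2 = (N:ℝ) * ((N:ℝ) - 1) := by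
    have hsplit : ∀ i, ∀ j ∈ univ.erase i,
        z i / (z i - z j) + z j / (z j - z i) = 1 := by
      intro i j hj
      have hij : z i - z j ≠ 0 := hzsub i j (Finset.mem_erase.mp hj).1.symm
      have hji : z j - z i ≠ 0 := fun h => hij (by linarith [sub_eq_zero.mp h])
      field_simp
      ring
    have : ∑ i, ∑ j ∈ univ.erase i, (z i / (z i - z j) + z j / (z j - z i))
        = (N:ℝ) * ((N:ℝ) - 1) := by
      rw [Finset.sum_congr rfl (fun i _ => Finset.sum_congr rfl (hsplit i))]
      rw [Finset.sum_congr rfl (fun i _ => Finset.sum_const (1:ℝ))]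
      simp only [Finset.card_erase_of_mem (Finset.mem_univ _), Finset.card_univ,
        Fintype.card_fin, nsmul_eq_mul, mul_one, Finset.sum_const]
      push_cast [Nat.cast_sub hN]
      ring
    rw [← this]
    simp only [Finset.sum_add_distrib]
    rw [hswap (fun i j => z j / (z j - z i))]
    ring
  have hsq : ∑ i, (z i)^2 = t * ((N:ℝ) * ((N:ℝ) - 1)) := by
    have : ∀ i, (z i)^2 = t * 2 * ∑ j ∈ univ.erase i, z i / (z i - z j) := by
      intro i
      have h1 : z i = 2 * (∑ j ∈ univ.erase i, 1 / (z i - z j)) * t :=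
        (div_eq_iff ht').mp (hcrit i)
      have h2 : ∑ j ∈ univ.erase i, z i / (z i - z j)
          = z i * ∑ j ∈ univ.erase i, 1 / (z i - z j) := by
        rw [Finset.mul_sum]
        exact Finset.sum_congr rfl (fun j _ => (mul_one_div _ _).symm)
      calc (z i)^2 = (2 * (∑ j ∈ univ.erase i, 1 / (z i - z j)) * t) * z i := by
            rw [← h1]; ring
      _ = t * 2 * ∑ j ∈ univ.erase i, z i / (z i - z j) := by
            rw [h2]; ring
    rw [Finset.sum_congr rfl (fun i _ => this i), ← Finset.mul_sum, ← h2T]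
    ring
  -- Part C : the polynomial and product identity
  have hpm : (∏ i, (Polynomial.X - Polynomial.C (z i))).Monic :=
    Polynomial.monic_prod_of_monic _ _ (fun i _ => Polynomial.monic_X_sub_C _)
  have hpd : (∏ i, (Polynomial.X - Polynomial.C (z i))).natDegree = N := by
    rw [Polynomial.natDegree_prod _ _ (fun i _ => Polynomial.X_sub_C_ne_zero _)]
    simp
  have hpq : (∏ i, (Polynomial.X - Polynomial.C (z i))) = hq t N :=
    eq_hq t N _ hpm hpd (crit_ode hN t ht' z hinj hcrit)
  have hP4 := P4 t z hpq
  set M : ℕ := ∑ k ∈ Finset.range N, k with hM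
  have hchain : ∏ i, ∏ j ∈ univ.erase i, (z i - z j)
      = (N:ℝ)^N * ∏ k ∈ Finset.range N, (-(k:ℝ) * t)^k := by
    calc ∏ i, ∏ j ∈ univ.erase i, (z i - z j)
        = ∏ i, Polynomial.eval (z i) (Polynomial.derivative (∏ i, (Polynomial.X - Polynomial.C (z i)))) :=
          (Finset.prod_congr rfl (fun i _ => (eval_deriv_prod z i).symm))
      _ = ∏ i, Polynomial.eval (z i) (Polynomial.C (N:ℝ) * hq t (N-1)) := by
          rw [hpq, hq_deriv]
      _ = (N:ℝ)^N * ∏ i, Polynomial.eval (z i) (hq t (N-1)) := by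
          simp only [Polynomial.eval_mul, Polynomial.eval_C]
          rw [Finset.prod_mul_distrib, Finset.prod_const, Finset.card_univ, Fintype.card_fin]
      _ = (N:ℝ)^N * ∏ k ∈ Finset.range N, (-(k:ℝ) * t)^k := by rw [hP4]
  have hsign : ∏ i, ∏ j ∈ univ.erase i, (z i - z j)
      = (-1:ℝ)^M * ∏ i, ∏ j ∈ univ.filter (fun j => i < j), (z i - z j)^2 := by
    rw [prod_erase_pairs]
    have hstep : ∀ i : Fin N, ∏ j ∈ univ.filter (fun j => i < j), ((z i - z j) * (z j - z i))
        = (-1:ℝ)^(#(univ.filter (fun j => i < j))) * ∏ j ∈ univ.filter (fun j => i < j), (z i - z j)^2 := by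
      intro i
      rw [← Finset.prod_const (-1:ℝ), ← Finset.prod_mul_distrib]
      refine Finset.prod_congr rfl (fun j _ => ?_)
      ring
    rw [Finset.prod_congr rfl (fun i _ => hstep i), Finset.prod_mul_distrib,
      Finset.prod_pow_eq_pow_sum, card_pairs, ← hM]
  have hrangeprod : ∏ k ∈ Finset.range N, (-(k:ℝ) * t)^k
      = (-1:ℝ)^M * (t^M * ∏ k ∈ Finset.range N, (k:ℝ)^k) := by
    have : ∀ k ∈ Finset.range N, (-(k:ℝ) * t)^k = (-1:ℝ)^k * ((k:ℝ)^k * t^k) := by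
      intro k _
      rw [show -(k:ℝ) * t = (-1) * ((k:ℝ) * t) by ring, mul_pow, mul_pow]
    rw [Finset.prod_congr rfl this, Finset.prod_mul_distrib, Finset.prod_mul_distrib,
      Finset.prod_pow_eq_pow_sum, Finset.prod_pow_eq_pow_sum, ← hM]
    ring
  have hNN : (N:ℝ)^N * ∏ k ∈ Finset.range N, (k:ℝ)^k
      = ∏ k ∈ Finset.range N, ((k:ℝ) + 1)^(k+1) := by
    have h1 := Finset.prod_range_succ (fun k : ℕ => (k:ℝ)^k) N
    have h2 := Finset.prod_range_succ' (fun k : ℕ => (k:ℝ)^k) N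
    simp only [pow_zero, mul_one, Nat.cast_zero] at h1 h2
    rw [h2] at h1
    rw [mul_comm, ← h1]
    exact Finset.prod_congr rfl (fun k _ => by push_cast; rfl)
  have hgrand : ∏ i, ∏ j ∈ univ.filter (fun j => i < j), (z i - z j)^2
      = t^M * ∏ k ∈ Finset.range N, ((k:ℝ) + 1)^(k+1) := by
    have hc := hsign.symm.trans hchain
    rw [hrangeprod] at hc
    have hc' : (-1:ℝ)^M * (∏ i, ∏ j ∈ univ.filter (fun j => i < j), (z i - z j)^2)
        = (-1:ℝ)^M * ((N:ℝ)^N * (t^M * ∏ k ∈ Finset.range N, (k:ℝ)^k)) :=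
      hc.trans (by ring)
    have hcc := mul_left_cancel₀ (pow_ne_zero M (by norm_num : (-1:ℝ) ≠ 0)) hc'
    rw [hcc, ← hNN]
    ring
  -- logs
  have hpos : ∀ i : Fin N, ∀ j ∈ univ.filter (fun j => i < j), (0:ℝ) < z i - z j :=
    fun i j hj => sub_pos.mpr (hord (Finset.mem_filter.mp hj).2)
  have hlog : 2 * ∑ i, ∑ j ∈ univ.filter (fun j => i < j), Real.log (z i - z j)
      = (M:ℝ) * Real.log t + ∑ k ∈ Finset.range N, ((k:ℝ)+1) * Real.log ((k:ℝ)+1) := by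
    have hL : Real.log (∏ i, ∏ j ∈ univ.filter (fun j => i < j), (z i - z j)^2)
        = 2 * ∑ i, ∑ j ∈ univ.filter (fun j => i < j), Real.log (z i - z j) := by
      rw [Real.log_prod (fun i _ => Finset.prod_ne_zero_iff.mpr
        (fun j hj => pow_ne_zero 2 (ne_of_gt (hpos i j hj))))]
      rw [Finset.mul_sum]
      refine Finset.sum_congr rfl (fun i _ => ?_)
      rw [Real.log_prod (fun j hj => pow_ne_zero 2 (ne_of_gt (hpos i j hj))), Finset.mul_sum]
      refine Finset.sum_congr rfl (fun j hj => ?_)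
      rw [Real.log_pow]
      push_cast
      ring
    have hR : Real.log (t^M * ∏ k ∈ Finset.range N, ((k:ℝ) + 1)^(k+1))
        = (M:ℝ) * Real.log t + ∑ k ∈ Finset.range N, ((k:ℝ)+1) * Real.log ((k:ℝ)+1) := by
      have hprodne : (∏ k ∈ Finset.range N, ((k:ℝ) + 1)^(k+1)) ≠ 0 :=
        Finset.prod_ne_zero_iff.mpr (fun k _ => pow_ne_zero _ (by positivity))
      rw [Real.log_mul (pow_ne_zero M ht') hprodne, Real.log_pow,
        Real.log_prod (fun k _ => pow_ne_zero _ (by positivity))]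
      congr 1
      refine Finset.sum_congr rfl (fun k _ => ?_)
      rw [Real.log_pow]
      push_cast
      ring
    rw [← hL, ← hR, hgrand]
  have hMcast : (M:ℝ) = (N:ℝ) * ((N:ℝ) - 1) / 2 := by
    have h := Finset.sum_range_id_mul_two N
    have h2 : ((M * 2 : ℕ) : ℝ) = ((N * (N-1) : ℕ) : ℝ) := by
      rw [hM]; exact_mod_cast congrArg (Nat.cast : ℕ → ℝ) h
    push_cast [Nat.cast_sub hN] at h2
    linarith
  rw [hlog, hsq, hMcast]
  field_simp
  ring
end

section
/- Let z_1^{(1)} > ... > z_{N-1}^{(1)} > 0 be the zeros of the Laguerre polynomial L_{N-1}^{(1)} and set r = (r_1,...,r_N) with r_i = √(2 z_i^{(1)}) for i < N and r_N = 0. Then for each i = 1,...,N-1: 4·Σ_{j≠i} 1/(r_i² - r_j²) = 1. -/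
open Finset

noncomputable def laguerre (α : ℝ) (N : ℕ) (x : ℝ) : ℝ :=
  ∑ k ∈ Finset.range (N + 1),
    ((∏ i ∈ Finset.range (N - k), (α + N - i)) / (Nat.factorial (N - k) : ℝ)) *
      ((-x) ^ k / (Nat.factorial k : ℝ))

/-! The polynomial `L = laguerrePoly α n` satisfies `x L'' + (α + 1 - x) L' + n L = 0`. At a simple
zero `z_i` this leaves `z_i L''(z_i) + (α + 1 - z_i) L'(z_i) = 0`, and writing `L` as a multiple of
`∏ (X - z_j)` gives `L''(z_i) = 2 L'(z_i) ∑_{j ≠ i} (z_i - z_j)⁻¹`; since `L'(z_i) ≠ 0` this is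
Stieltjes' relation `2 z_i ∑_{j ≠ i} (z_i - z_j)⁻¹ = z_i - α - 1`. For `α = 1` and `r_j² = 2 z_j`,
the sum over the `z_j` contributes `∑ 1/(2 z_i - 2 z_j)` and the extra point `r_N = 0` contributes
`1 / (2 z_i)`, and the relation makes the total `1/4`. -/

open Polynomial Lagrange

theorem Set.InjOn.apply_ne_of_mem_erase {ι β : Type*} [DecidableEq ι] {f : ι → β} {s : Finset ι}
    (hf : Set.InjOn f s) {i : ι} (hi : i ∈ s) : ∀ j ∈ s.erase i, f i ≠ f j := fun _ hj =>
  (hf.ne_iff hi (mem_of_mem_erase hj)).mpr (ne_of_mem_erase hj).symm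

namespace Lagrange

section Nodal

variable {R : Type*} [CommRing R] [IsDomain R] {ι : Type*} {s : Finset ι} {v : ι → R}

theorem eq_C_coeff_mul_nodal {p : R[X]} (hvs : Set.InjOn v s) (hdeg : p.natDegree ≤ #s)
    (hroot : ∀ i ∈ s, p.eval (v i) = 0) : p = C (p.coeff #s) * nodal s v := by
  refine eq_of_degree_sub_lt_of_eval_index_eq s hvs ?_ fun i hi => ?_
  · refine (degree_lt_iff_coeff_zero _ _).mpr fun m hm => ?_
    rw [coeff_sub, coeff_C_mul, sub_eq_zero]
    obtain heq | hlt := hm.eq_or_lt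
    · have hlead : (nodal s v).coeff #s = 1 := by
        simpa using (nodal_monic (s := s) (v := v)).coeff_natDegree
      rw [← heq, hlead, mul_one]
    · rw [coeff_eq_zero_of_natDegree_lt (hdeg.trans_lt hlt),
        coeff_eq_zero_of_natDegree_lt (natDegree_nodal.trans_lt hlt), mul_zero]
  · rw [hroot i hi, eval_mul, eval_nodal_at_node hi, mul_zero]

end Nodal

section NodalField

variable {F : Type*} [Field F] {ι : Type*} [DecidableEq ι] {s : Finset ι} {v : ι → F}

theorem eval_derivative_nodal_not_at_node {x : F} (hx : ∀ j ∈ s, x ≠ v j) :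
    (derivative (nodal s v)).eval x = (nodal s v).eval x * ∑ j ∈ s, (x - v j)⁻¹ := by
  rw [derivative_nodal, eval_finsetSum, mul_sum]
  refine sum_congr rfl fun j hj => ?_
  have hxj : x - v j ≠ 0 := sub_ne_zero.mpr (hx j hj)
  rw [nodal_eq_mul_nodal_erase hj, eval_mul]
  simp only [eval_sub, eval_X, eval_C]
  field_simp

theorem eval_derivative_derivative_nodal_at_node (hvs : Set.InjOn v s) {i : ι} (hi : i ∈ s) :
    (derivative (derivative (nodal s v))).eval (v i) =
      2 * (derivative (nodal s v)).eval (v i) * ∑ j ∈ s.erase i, (v i - v j)⁻¹ := by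
  rw [eval_nodal_derivative_eval_node_eq hi, mul_assoc,
    ← eval_derivative_nodal_not_at_node (hvs.apply_ne_of_mem_erase hi), nodal_eq_mul_nodal_erase hi]
  simp only [derivative_mul, derivative_sub, derivative_X, derivative_C, sub_zero, one_mul,
    derivative_add, eval_add, eval_mul, eval_sub, eval_X, eval_C, sub_self, zero_mul, add_zero]
  ring

theorem eval_derivative_nodal_at_node_ne_zero (hvs : Set.InjOn v s) {i : ι} (hi : i ∈ s) :
    (derivative (nodal s v)).eval (v i) ≠ 0 := by
  rw [eval_nodal_derivative_eval_node_eq hi]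
  exact eval_nodal_not_at_node (hvs.apply_ne_of_mem_erase hi)

end NodalField

end Lagrange

/-- The coefficient `binom(n + α, n - k) (-1)^k / k!` of `x^k` in `laguerre α n x`. -/
noncomputable def laguerreCoeff (α : ℝ) (n k : ℕ) : ℝ :=
  (∏ i ∈ range (n - k), (α + n - i)) / (n - k).factorial * ((-1) ^ k / k.factorial)

noncomputable def laguerrePoly (α : ℝ) (n : ℕ) : ℝ[X] :=
  ∑ k ∈ range (n + 1), C (laguerreCoeff α n k) * X ^ k

namespace laguerrePoly

variable (α : ℝ) (n : ℕ)

theorem eval_eq (x : ℝ) : (laguerrePoly α n).eval x = laguerre α n x := by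
  simp only [laguerrePoly, laguerre, laguerreCoeff, eval_finsetSum, eval_mul, eval_C, eval_pow,
    eval_X, neg_pow x]
  refine sum_congr rfl fun k _ => ?_
  ring

theorem coeff_eq (k : ℕ) :
    (laguerrePoly α n).coeff k = if k ≤ n then laguerreCoeff α n k else 0 := by
  simp only [laguerrePoly, finsetSum_coeff, coeff_C_mul_X_pow, sum_ite_eq, mem_range,
    Nat.lt_succ_iff]

theorem natDegree_le : (laguerrePoly α n).natDegree ≤ n :=
  natDegree_sum_le_of_forall_le _ _ fun k hk =>
    (natDegree_C_mul_X_pow_le _ k).trans (Nat.lt_succ_iff.mp (mem_range.mp hk))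

theorem coeff_self_ne_zero : (laguerrePoly α n).coeff n ≠ 0 := by
  rw [coeff_eq, if_pos le_rfl, laguerreCoeff, Nat.sub_self]
  simp [Nat.factorial_ne_zero]

theorem coeff_succ_recurrence (k : ℕ) :
    (k + 1) * (k + 1 + α) * (laguerrePoly α n).coeff (k + 1) +
      (n - k) * (laguerrePoly α n).coeff k = 0 := by
  rcases lt_trichotomy k n with hlt | rfl | hgt
  · obtain ⟨m, rfl⟩ := Nat.exists_eq_add_of_lt hlt
    rw [coeff_eq, coeff_eq, if_pos (by omega), if_pos (by omega), laguerreCoeff, laguerreCoeff,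
      show k + m + 1 - (k + 1) = m by omega, show k + m + 1 - k = m + 1 by omega,
      prod_range_succ, Nat.factorial_succ, Nat.factorial_succ]
    push_cast
    field_simp
    ring
  · simp [coeff_eq]
  · simp [coeff_eq, hgt.not_ge, show ¬k + 1 ≤ n by omega]

theorem ode :
    X * derivative (derivative (laguerrePoly α n)) +
      (C (α + 1) - X) * derivative (laguerrePoly α n) + C (n : ℝ) * laguerrePoly α n = 0 := by
  ext k
  have hrec := coeff_succ_recurrence α n k
  cases k with
  | zero =>
    simp only [coeff_add, sub_mul, coeff_sub, mul_coeff_zero, coeff_X_zero, coeff_derivative,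
      coeff_zero, zero_mul, coeff_C_zero]
    push_cast at hrec ⊢
    linarith
  | succ k =>
    simp only [coeff_add, sub_mul, coeff_sub, coeff_X_mul, coeff_C_mul, coeff_derivative,
      coeff_zero]
    push_cast at hrec ⊢
    linarith

end laguerrePoly

theorem laguerre_roots_stieltjes (α : ℝ) {ι : Type*} [DecidableEq ι] {s : Finset ι}
    {v : ι → ℝ} (hvs : Set.InjOn v s) (hroot : ∀ i ∈ s, laguerre α #s (v i) = 0)
    {i : ι} (hi : i ∈ s) :
    2 * v i * ∑ j ∈ s.erase i, (v i - v j)⁻¹ + (α + 1 - v i) = 0 := by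
  obtain ⟨c, hc, hfactor⟩ : ∃ c ≠ 0, laguerrePoly α #s = C c * nodal s v :=
    ⟨_, laguerrePoly.coeff_self_ne_zero α #s, eq_C_coeff_mul_nodal hvs
      (laguerrePoly.natDegree_le α #s)
      fun j hj => (laguerrePoly.eval_eq α #s (v j)).trans (hroot j hj)⟩
  have hode := congrArg (eval (v i)) (laguerrePoly.ode α #s)
  rw [hfactor] at hode
  simp only [derivative_C_mul, eval_add, eval_mul, eval_sub, eval_X, eval_C, eval_zero,
    eval_nodal_at_node hi, mul_zero, add_zero,
    eval_derivative_derivative_nodal_at_node hvs hi] at hode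
  have hne : c * (derivative (nodal s v)).eval (v i) ≠ 0 :=
    mul_ne_zero hc (eval_derivative_nodal_at_node_ne_zero hvs hi)
  refine (mul_eq_zero.mp ?_).resolve_right hne
  linear_combination hode

theorem Fin.sum_univ_erase_castSucc {β : Type*} [AddCommGroup β] {n : ℕ} (f : Fin (n + 1) → β)
    (i : Fin n) :
    ∑ j ∈ univ.erase i.castSucc, f j = ∑ j ∈ univ.erase i, f j.castSucc + f (Fin.last n) := by
  rw [sum_erase_eq_sub (mem_univ _), sum_erase_eq_sub (mem_univ _), Fin.sum_univ_castSucc]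
  abel

/-- With `N = M + 1`: zeros of `L_{N-1}^{(1)}` give `r_1,…,r_{N-1}`, and `r_N = 0`. -/
theorem stmt_12 (M : ℕ) (z : Fin M → ℝ) (hord : StrictAnti z) (hpos : ∀ i, 0 < z i)
    (hzero : ∀ i, laguerre 1 M (z i) = 0)
    (r : Fin (M + 1) → ℝ)
    (hr : r = Fin.snoc (fun i => Real.sqrt (2 * z i)) 0) :
    ∀ i : Fin M,
      4 * ∑ j ∈ Finset.univ.erase (Fin.castSucc i),
          1 / (r (Fin.castSucc i) ^ 2 - r j ^ 2) = 1 := by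
  intro i
  have hstieltjes := laguerre_roots_stieltjes 1 hord.injective.injOn
    (by simpa using hzero) (mem_univ i)
  have hsq : ∀ j, Real.sqrt (2 * z j) ^ 2 = 2 * z j := fun j =>
    Real.sq_sqrt (by linarith [hpos j])
  have hhalf : ∑ j ∈ univ.erase i, 1 / (2 * z i - 2 * z j) =
      (∑ j ∈ univ.erase i, (z i - z j)⁻¹) / 2 := by
    rw [sum_div]
    refine sum_congr rfl fun j _ => ?_
    rw [← mul_sub, one_div, mul_inv, inv_mul_eq_div]
  subst hr
  rw [Fin.sum_univ_erase_castSucc]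
  simp only [Fin.snoc_castSucc, Fin.snoc_last, hsq, hhalf, zero_pow two_ne_zero, sub_zero]
  generalize ∑ j ∈ univ.erase i, (z i - z j)⁻¹ = S at hstieltjes ⊢
  have hzi := (hpos i).ne'
  field_simp
  linear_combination 2 * hstieltjes
end
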